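/- arXiv:1408.3454 — 4 statements merged into one kernel-verified Lean document; each statement's English description precedes it below -/
import Mathlib

section
/- If exactly two of the three starting values of an M&m sequence are equal (say a = b < c), then the M&m sequence becomes stable after at most five iterations: there exists k ≤ 9 such that x_n = x_k for all n ≥ k. -/
open Finset Filter

/-- The median of a finite list of reals: the middle element of the sorted list
if the length is odd, and the average of the two middle elements if it is even. -/
noncomputable def med (l : List ℝ) : ℝ :=
  let s := l.insertionSort (· ≤ ·)
  if l.length % 2 = 1 then s.getD (l.length / 2) 0
  else (s.getD (l.length / 2 - 1) 0 + s.getD (l.length / 2) 0) / 2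

/-- The list of the first `n` terms `X 1, …, X n`. -/
def firstTerms (X : ℕ → ℝ) (n : ℕ) : List ℝ := (List.range' 1 n).map X

/-- The median `m_n` of the first `n` terms. -/
noncomputable def medn (X : ℕ → ℝ) (n : ℕ) : ℝ := med (firstTerms X n)

/-- `X` is the M&m sequence generated from the starting triple `(a, b, c)`:
`x_n = n · med(x_1,…,x_{n-1}) − (x_1 + ⋯ + x_{n-1})` for `n ≥ 4`. -/
def IsMnM (a b c : ℝ) (X : ℕ → ℝ) : Prop :=
  X 1 = a ∧ X 2 = b ∧ X 3 = c ∧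
  ∀ n, 4 ≤ n → X n = n * medn X (n - 1) - ∑ j ∈ Finset.Icc 1 (n - 1), X j

/-!
With `a = b < c` the median of `a, a, c` is `a`, so `x₄ = 4a - (2a + c) = 2a - c`. From then on
the first `n` terms are `2a - c`, `c` and `n - 2` copies of `a`: since `2a - c ≤ a ≤ c`, their
median is `a`, and it is also their mean, so the next term is again `a`. Hence `x_n = a` for
all `n ≥ 5`.
-/

lemma med_perm {l l' : List ℝ} (h : l.Perm l') : med l = med l' := by
  have hsort : l.insertionSort (· ≤ ·) = l'.insertionSort (· ≤ ·) :=
    ((List.perm_insertionSort _ l).trans (h.trans (List.perm_insertionSort _ l').symm))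
      |>.eq_of_pairwise' (List.pairwise_insertionSort _ l) (List.pairwise_insertionSort _ l')
  simp only [med, hsort, h.length_eq]

lemma med_cons_replicate_append {u a v : ℝ} (hu : u ≤ a) (hv : a ≤ v) {k : ℕ} (hk : 1 ≤ k) :
    med (u :: List.replicate k a ++ [v]) = a := by
  have hsorted : (u :: (List.replicate k a ++ [v])).Pairwise (· ≤ ·) := by
    simp only [List.pairwise_cons, List.pairwise_append, List.mem_append, List.mem_replicate,
      List.mem_singleton, List.pairwise_replicate]
    refine ⟨?_, Or.inr le_rfl, by simp, ?_⟩
    · rintro b (⟨-, rfl⟩ | rfl) <;> linarith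
    · rintro b ⟨-, rfl⟩ _ rfl; exact hv
  have hmid : ∀ i, 1 ≤ i → i ≤ k → (u :: (List.replicate k a ++ [v])).getD i 0 = a := by
    intro i hi1 hik
    obtain ⟨j, rfl⟩ : ∃ j, i = j + 1 := ⟨i - 1, by omega⟩
    rw [List.getD_cons_succ, List.getD_append _ _ _ _ (by simp; omega),
      List.getD_eq_getElem?_getD, List.getElem?_replicate, if_pos (by omega)]
    rfl
  simp only [med, List.cons_append, hsorted.insertionSort_eq, List.length_cons, List.length_append,
    List.length_replicate, List.length_nil]
  split_ifs
  · exact hmid _ (by omega) (by omega)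
  · rw [hmid _ (by omega) (by omega), hmid _ (by omega) (by omega)]; ring

lemma sum_Icc_eq_sum_firstTerms (X : ℕ → ℝ) (n : ℕ) :
    ∑ j ∈ Icc 1 n, X j = (firstTerms X n).sum := by
  rw [← List.toFinset_range'_1_1, List.sum_toFinset _ List.nodup_range']
  rfl

lemma firstTerms_succ (X : ℕ → ℝ) (n : ℕ) :
    firstTerms X (n + 1) = firstTerms X n ++ [X (n + 1)] := by
  rw [firstTerms, List.range'_1_concat, List.map_append, add_comm]
  rfl

namespace IsMnM

variable {a b c : ℝ} {X : ℕ → ℝ}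

lemma firstTerms_three (h : IsMnM a b c X) : firstTerms X 3 = [a, b, c] := by
  simp [firstTerms, List.range'_succ, h.1, h.2.1, h.2.2.1]

lemma apply_eq (h : IsMnM a b c X) {n : ℕ} (hn : 3 ≤ n) :
    X (n + 1) = (n + 1) * med (firstTerms X n) - (firstTerms X n).sum := by
  rw [h.2.2.2 (n + 1) (by omega), medn, sum_Icc_eq_sum_firstTerms]
  push_cast
  rfl

lemma apply_eq_of_med_eq_mean (h : IsMnM a b c X) {n : ℕ} (hn : 3 ≤ n) {μ : ℝ}
    (hmed : med (firstTerms X n) = μ) (hsum : (firstTerms X n).sum = n * μ) :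
    X (n + 1) = μ := by
  rw [h.apply_eq hn, hmed, hsum]
  ring

lemma four_eq (hac : a ≤ c) (h : IsMnM a a c X) : X 4 = 2 * a - c := by
  have hmed : med [a, a, c] = a := med_cons_replicate_append (k := 1) le_rfl hac le_rfl
  rw [h.apply_eq le_rfl, h.firstTerms_three, hmed]
  norm_num
  ring

lemma apply_eq_of_perm (h : IsMnM a b c X) {u m v : ℝ} (hu : u ≤ m) (hv : m ≤ v)
    (huv : u + v = 2 * m) {k : ℕ} (hk : 1 ≤ k)
    (hp : (firstTerms X (k + 2)).Perm (u :: List.replicate k m ++ [v])) :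
    X (k + 2 + 1) = m := by
  have hmed : med (firstTerms X (k + 2)) = m := by
    rw [med_perm hp]
    exact med_cons_replicate_append hu hv hk
  have hsum : (firstTerms X (k + 2)).sum = ↑(k + 2) * m := by
    rw [hp.sum_eq]
    simp only [List.cons_append, List.sum_cons, List.sum_append, List.sum_replicate,
      List.sum_nil, nsmul_eq_mul]
    push_cast
    linear_combination huv
  exact h.apply_eq_of_med_eq_mean (by omega) hmed hsum

lemma firstTerms_perm (hac : a ≤ c) (h : IsMnM a a c X) {k : ℕ} (hk : 2 ≤ k) :
    (firstTerms X (k + 2)).Perm ((2 * a - c) :: List.replicate k a ++ [c]) := by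
  induction k, hk using Nat.le_induction with
  | base =>
    rw [firstTerms_succ, h.firstTerms_three, h.four_eq hac]
    exact List.perm_append_singleton _ _
  | succ k hk ih =>
    rw [firstTerms_succ, h.apply_eq_of_perm (by linarith) hac (by ring) (by omega) ih,
      List.replicate_succ']
    refine (ih.append_right [a]).trans ?_
    simp only [List.cons_append, List.append_assoc, List.nil_append, List.perm_cons,
      List.perm_append_left_iff]
    exact List.Perm.swap a c []

lemma eq_of_five_le (hac : a ≤ c) (h : IsMnM a a c X) {n : ℕ} (hn : 5 ≤ n) : X n = a := by
  obtain ⟨k, hk, rfl⟩ : ∃ k, 2 ≤ k ∧ n = k + 2 + 1 := ⟨n - 3, by omega, by omega⟩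
  exact h.apply_eq_of_perm (by linarith) hac (by ring) (by omega) (h.firstTerms_perm hac hk)

end IsMnM

theorem mnm_stable_of_two_equal (a c : ℝ) (hac : a < c) (X : ℕ → ℝ)
    (h : IsMnM a a c X) :
    ∃ k, k ≤ 9 ∧ ∀ n, k ≤ n → X n = X k :=
  ⟨5, by norm_num, fun n hn => by rw [h.eq_of_five_le hac.le hn, h.eq_of_five_le hac.le le_rfl]⟩
end

section
/- The M&m construction is affinely equivariant: if φ(t) = αt + β with α ≠ 0 and (x_n) is the M&m sequence generated from (a, b, c), then the M&m sequence generated from (φ(a), φ(b), φ(c)) is (φ(x_n)). Consequently the study of M&m sequences for arbitrary a < b < c reduces to starting triples (0, x, 1) with 0 < x < 1. -/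
open Finset Filter

/-!
An affine map `t ↦ α t + β` is monotone for `α ≥ 0` and antitone for `α ≤ 0`, so it maps the
sorted copy of a list to the sorted copy of its image, possibly reversed. The middle value of a
sorted list does not see reversal and commutes with affine maps (also when it is an average of
two entries), hence `med` commutes with them. The recursion is then preserved since
`n β - (n - 1) β = β`. The normalisation uses `α = c - a`, `β = a`, `x = (b - a) / (c - a)`.
-/

namespace List

variable {α β : Type*} [LinearOrder α] [LinearOrder β]

theorem insertionSort_map_of_monotone {f : α → β} (hf : Monotone f) (l : List α) :
    (l.map f).insertionSort (· ≤ ·) = (l.insertionSort (· ≤ ·)).map f :=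
  ((perm_insertionSort _ _).trans ((perm_insertionSort _ _).map f).symm).eq_of_pairwise'
    (pairwise_insertionSort _ _) (pairwise_map.2 ((pairwise_insertionSort _ _).imp (hf ·)))

theorem insertionSort_map_of_antitone {f : α → β} (hf : Antitone f) (l : List α) :
    (l.map f).insertionSort (· ≤ ·) = ((l.insertionSort (· ≤ ·)).map f).reverse :=
  ((perm_insertionSort _ _).trans
      (((perm_insertionSort _ _).map f).symm.trans (reverse_perm _).symm)).eq_of_pairwise'
    (pairwise_insertionSort _ _)
    (pairwise_reverse.2 (pairwise_map.2 ((pairwise_insertionSort _ _).imp (hf ·))))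

end List

noncomputable def middle (s : List ℝ) : ℝ :=
  if s.length % 2 = 1 then s.getD (s.length / 2) 0
  else (s.getD (s.length / 2 - 1) 0 + s.getD (s.length / 2) 0) / 2

theorem med_eq_middle_insertionSort (l : List ℝ) :
    med l = middle (l.insertionSort (· ≤ ·)) := by
  simp only [med, middle, List.length_insertionSort]

theorem middle_reverse (s : List ℝ) : middle s.reverse = middle s := by
  rcases eq_or_ne s [] with rfl | hs
  · rfl
  have hpos := List.length_pos_iff.2 hs
  unfold middle
  rw [List.length_reverse]
  split_ifs
  · rw [List.getD_reverse _ (by omega)]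
    congr 2
    omega
  · rw [List.getD_reverse _ (by omega), List.getD_reverse _ (by omega), add_comm]
    congr 3 <;> omega

theorem middle_map_affine {s : List ℝ} (hs : s ≠ []) (α β : ℝ) :
    middle (s.map fun t => α * t + β) = α * middle s + β := by
  have hpos := List.length_pos_iff.2 hs
  have getD_map_of_lt : ∀ i < s.length,
      (s.map fun t => α * t + β).getD i 0 = α * s.getD i 0 + β := fun i hi => by
    rw [List.getD_eq_getElem _ _ (by simpa using hi), List.getD_eq_getElem _ _ hi,
      List.getElem_map]
  unfold middle
  rw [List.length_map]
  split_ifs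
  · exact getD_map_of_lt _ (by omega)
  · rw [getD_map_of_lt _ (by omega), getD_map_of_lt _ (by omega)]
    ring

theorem med_map_affine {l : List ℝ} (hl : l ≠ []) (α β : ℝ) :
    med (l.map fun t => α * t + β) = α * med l + β := by
  have hs : l.insertionSort (· ≤ ·) ≠ [] := by
    simpa [← List.length_pos_iff] using List.length_pos_iff.2 hl
  rw [med_eq_middle_insertionSort, med_eq_middle_insertionSort]
  rcases le_total 0 α with hα | hα
  · rw [List.insertionSort_map_of_monotone (fun x y hxy => by nlinarith)]
    exact middle_map_affine hs α β
  · rw [List.insertionSort_map_of_antitone (fun x y hxy => by nlinarith), middle_reverse]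
    exact middle_map_affine hs α β

theorem medn_affine (X : ℕ → ℝ) {n : ℕ} (hn : n ≠ 0) (α β : ℝ) :
    medn (fun k => α * X k + β) n = α * medn X n + β := by
  have hne : firstTerms X n ≠ [] := by simpa [firstTerms] using hn
  rw [medn, medn, ← med_map_affine hne, firstTerms, firstTerms, List.map_map]
  rfl

theorem IsMnM.affine {a b c : ℝ} {X : ℕ → ℝ} (hX : IsMnM a b c X) (α β : ℝ) :
    IsMnM (α * a + β) (α * b + β) (α * c + β) (fun n => α * X n + β) := by
  obtain ⟨rfl, rfl, rfl, hrec⟩ := hX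
  refine ⟨rfl, rfl, rfl, fun n hn => ?_⟩
  have hcard : ((Icc 1 (n - 1)).card : ℝ) = n - 1 := by
    rw [Nat.card_Icc, Nat.add_sub_cancel, Nat.cast_sub (by omega), Nat.cast_one]
  dsimp only
  rw [medn_affine X (by omega), hrec n hn, sum_add_distrib, ← mul_sum, sum_const, nsmul_eq_mul,
    hcard]
  ring

theorem mnm_affine_equivariant :
    (∀ (α β a b c : ℝ), α ≠ 0 → ∀ X : ℕ → ℝ, IsMnM a b c X →
      IsMnM (α * a + β) (α * b + β) (α * c + β) (fun n => α * X n + β)) ∧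
    (∀ a b c : ℝ, a < b → b < c → ∃ α β x : ℝ, α ≠ 0 ∧ 0 < x ∧ x < 1 ∧
      α * 0 + β = a ∧ α * x + β = b ∧ α * 1 + β = c) := by
  refine ⟨fun α β a b c _ X hX => hX.affine α β, fun a b c hab hbc => ?_⟩
  have hca : 0 < c - a := by linarith
  refine ⟨c - a, a, (b - a) / (c - a), hca.ne', div_pos (by linarith) hca,
    (div_lt_one hca).2 (by linarith), by ring, ?_, by ring⟩
  rw [mul_div_cancel₀ _ hca.ne']
  ring
end

section
/- Conversely, if the median sequence of an M&m sequence started from (0, x, 1) becomes constant, say m_n = M for all n ≥ k, then the sequence itself becomes constant: x_n = M for all n ≥ k + 2. -/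
open Finset Filter

/-!
The recursion says that the partial sums are `x₁ + ⋯ + xₙ = n · m_{n-1}` for `n ≥ 4`; subtracting
two consecutive ones gives `xₙ = n · m_{n-1} - (n - 1) · m_{n-2}`, which is `M` as soon as both
medians are `M`. Constancy cannot start at `k ≤ 2`, since `m₂ = x / 2 ≠ x = m₃`.
-/

lemma med_pair (a b : ℝ) : med [a, b] = (a + b) / 2 := by
  by_cases hab : a ≤ b
  · simp [med, List.insertionSort, hab]
  · simp [med, List.insertionSort, hab, add_comm]

lemma med_triple_of_le {a b c : ℝ} (hab : a ≤ b) (hbc : b ≤ c) : med [a, b, c] = b := by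
  simp [med, List.insertionSort, hab, hbc]

lemma medn_two (X : ℕ → ℝ) : medn X 2 = (X 1 + X 2) / 2 :=
  med_pair (X 1) (X 2)

lemma medn_three_of_le {X : ℕ → ℝ} (h12 : X 1 ≤ X 2) (h23 : X 2 ≤ X 3) : medn X 3 = X 2 :=
  med_triple_of_le h12 h23

namespace IsMnM

variable {a b c : ℝ} {X : ℕ → ℝ}

lemma sum_Icc_eq (h : IsMnM a b c X) {n : ℕ} (hn : 4 ≤ n) :
    ∑ j ∈ Icc 1 n, X j = n * medn X (n - 1) := by
  obtain ⟨n, rfl⟩ : ∃ m, n = m + 1 := ⟨n - 1, by omega⟩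
  rw [sum_Icc_succ_top (by omega), h.2.2.2 (n + 1) hn]
  simp

lemma eq_sub_of_three_le (h : IsMnM a b c X) {n : ℕ} (hn : 3 ≤ n) :
    X (n + 2) = (n + 2) * medn X (n + 1) - (n + 1) * medn X n := by
  rw [h.2.2.2 (n + 2) (by omega), show n + 2 - 1 = n + 1 from rfl,
    h.sum_Icc_eq (by omega : 4 ≤ n + 1), Nat.add_sub_cancel]
  push_cast
  ring

lemma eq_of_medn_eq (h : IsMnM a b c X) {n : ℕ} (hn : 3 ≤ n) {M : ℝ}
    (hM : medn X n = M) (hM' : medn X (n + 1) = M) : X (n + 2) = M := by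
  rw [h.eq_sub_of_three_le hn, hM, hM']
  ring

lemma medn_two_ne_medn_three {x : ℝ} (hx0 : 0 < x) (hx1 : x < 1) (h : IsMnM 0 x 1 X) :
    medn X 2 ≠ medn X 3 := by
  obtain ⟨h1, h2, h3, -⟩ := h
  rw [medn_two, medn_three_of_le (by linarith) (by linarith), h1, h2]
  linarith

end IsMnM

theorem stable_of_median_const (x : ℝ) (hx0 : 0 < x) (hx1 : x < 1) (X : ℕ → ℝ)
    (h : IsMnM 0 x 1 X) (k : ℕ) (M : ℝ)
    (hmed : ∀ n, k ≤ n → medn X n = M) :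
    ∀ n, k + 2 ≤ n → X n = M := by
  have hk : 3 ≤ k := by
    by_contra! hk
    exact h.medn_two_ne_medn_three hx0 hx1 ((hmed 2 (by omega)).trans (hmed 3 (by omega)).symm)
  intro n hn
  obtain ⟨n, rfl⟩ : ∃ m, n = m + 2 := ⟨n - 2, by omega⟩
  exact h.eq_of_medn_eq (by omega) (hmed n (by omega)) (hmed (n + 1) (by omega))
end

section
/- For each fixed n, on any interval of x-values for which the relative order (the permutation sorting the list) of (x₁, x₂, …, x_n) of the M&m sequence started from (0, x, 1) is constant, each term x_j (and each median m_j, j ≤ n) is an affine function of x with rational coefficients. -/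
open Finset Filter

/-!
When the relative order of `x₁, …, x_n` does not depend on `x`, the sorted list of the first
`j ≤ n` terms is the same permutation of them for every `x`, so `m_j` is a fixed term or the
average of two fixed terms. Hence affinity with rational coefficients passes from
`x₁, …, x_j` to `m_j`, and by the recursion to `x_{j+1}`; induct on `j`.
-/

def IsRatAffineOn (S : Set ℝ) (f : ℝ → ℝ) : Prop :=
  ∃ p q : ℚ, ∀ x ∈ S, f x = (p : ℝ) * x + (q : ℝ)

namespace IsRatAffineOn

variable {S : Set ℝ} {f g : ℝ → ℝ}

lemma of_empty (f : ℝ → ℝ) : IsRatAffineOn ∅ f := ⟨0, 0, fun _ hx => hx.elim⟩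

lemma congr (hf : IsRatAffineOn S f) (hfg : Set.EqOn f g S) : IsRatAffineOn S g := by
  obtain ⟨p, q, h⟩ := hf
  exact ⟨p, q, fun x hx => (hfg hx).symm.trans (h x hx)⟩

lemma const (q : ℚ) : IsRatAffineOn S fun _ => q := ⟨0, q, fun x _ => by simp⟩

lemma id : IsRatAffineOn S fun x => x := ⟨1, 0, fun x _ => by simp⟩

lemma add (hf : IsRatAffineOn S f) (hg : IsRatAffineOn S g) :
    IsRatAffineOn S fun x => f x + g x := by
  obtain ⟨p, q, hpq⟩ := hf
  obtain ⟨p', q', hpq'⟩ := hg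
  exact ⟨p + p', q + q', fun x hx => by simp only [hpq x hx, hpq' x hx]; push_cast; ring⟩

lemma const_mul (c : ℚ) (hf : IsRatAffineOn S f) : IsRatAffineOn S fun x => c * f x := by
  obtain ⟨p, q, hpq⟩ := hf
  exact ⟨c * p, c * q, fun x hx => by simp only [hpq x hx]; push_cast; ring⟩

lemma sub (hf : IsRatAffineOn S f) (hg : IsRatAffineOn S g) :
    IsRatAffineOn S fun x => f x - g x :=
  (hf.add (hg.const_mul (-1))).congr fun x _ => by push_cast; ring

lemma sum {ι : Type*} (t : Finset ι) {f : ι → ℝ → ℝ} (h : ∀ i ∈ t, IsRatAffineOn S (f i)) :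
    IsRatAffineOn S fun x => ∑ i ∈ t, f i x := by
  classical
  induction t using Finset.induction_on with
  | empty => exact (const 0).congr fun x _ => by simp
  | insert a t ha ih =>
    exact ((h a (mem_insert_self a t)).add (ih fun i hi => h i (mem_insert_of_mem hi))).congr
      fun x _ => (sum_insert (f := (f · x)) ha).symm

end IsRatAffineOn

lemma isRatAffineOn_med {S : Set ℝ} {l : ℝ → List ℝ} {n : ℕ} (hlen : ∀ x, (l x).length = n)
    (hsorted : ∀ k < n, IsRatAffineOn S fun x => ((l x).insertionSort (· ≤ ·)).getD k 0) :
    IsRatAffineOn S fun x => med (l x) := by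
  obtain rfl | hn := n.eq_zero_or_pos
  · exact (IsRatAffineOn.const 0).congr fun x _ => by
      simp [List.eq_nil_of_length_eq_zero (hlen x), med]
  simp only [med, hlen]
  by_cases hodd : n % 2 = 1
  · simpa only [hodd, if_true] using hsorted (n / 2) (by omega)
  · simp only [hodd, if_false]
    refine (((hsorted (n / 2 - 1) (by omega)).add (hsorted (n / 2) (by omega))).const_mul
      (1 / 2)).congr fun x _ => ?_
    push_cast
    ring

def OrderConstantOn (S : Set ℝ) (X : ℝ → ℕ → ℝ) (n : ℕ) : Prop :=
  ∀ x ∈ S, ∀ y ∈ S, ∀ i j, 1 ≤ i → i ≤ n → 1 ≤ j → j ≤ n → (X x i ≤ X x j ↔ X y i ≤ X y j)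

lemma OrderConstantOn.mono {S : Set ℝ} {X : ℝ → ℕ → ℝ} {m n : ℕ} (h : OrderConstantOn S X n)
    (hmn : m ≤ n) : OrderConstantOn S X m :=
  fun x hx y hy i j hi hin hj hjn => h x hx y hy i j hi (hin.trans hmn) hj (hjn.trans hmn)

lemma isRatAffineOn_medn {S : Set ℝ} {X : ℝ → ℕ → ℝ} {n : ℕ} (horder : OrderConstantOn S X n)
    (hterm : ∀ i, 1 ≤ i → i ≤ n → IsRatAffineOn S fun x => X x i) :
    IsRatAffineOn S fun x => medn (X x) n := by
  obtain rfl | ⟨x₀, hx₀⟩ := S.eq_empty_or_nonempty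
  · exact .of_empty _
  have hidx : ∀ i ∈ List.range' 1 n, 1 ≤ i ∧ i ≤ n := fun i hi => by
    rw [List.mem_range'_1] at hi; omega
  set σ := (List.range' 1 n).insertionSort fun i j => X x₀ i ≤ X x₀ j
  have hσ : ∀ i ∈ σ, 1 ≤ i ∧ i ≤ n := fun i hi => hidx i ((List.mem_insertionSort _).mp hi)
  have hsort : ∀ x ∈ S, (firstTerms (X x) n).insertionSort (· ≤ ·) = σ.map (X x) :=
    fun x hx => (List.map_insertionSort _ _ (X x) _ fun i hi j hj =>
      horder x₀ hx₀ x hx i j (hidx i hi).1 (hidx i hi).2 (hidx j hj).1 (hidx j hj).2).symm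
  refine isRatAffineOn_med (l := fun x => firstTerms (X x) n) (n := n)
    (fun x => by simp [firstTerms]) fun k hk => ?_
  have hkσ : k < σ.length := by simpa [σ] using hk
  have hmem := hσ _ (List.getElem_mem hkσ)
  refine (hterm σ[k] hmem.1 hmem.2).congr fun x hx => ?_
  rw [hsort x hx, List.getD_eq_getElem _ _ (by simpa using hkσ), List.getElem_map]

lemma isRatAffineOn_mnm_term {S : Set ℝ} {a b c : ℝ → ℝ} {X : ℝ → ℕ → ℝ} {n : ℕ}
    (ha : IsRatAffineOn S a) (hb : IsRatAffineOn S b) (hc : IsRatAffineOn S c)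
    (hX : ∀ x ∈ S, IsMnM (a x) (b x) (c x) (X x)) (horder : OrderConstantOn S X n) :
    ∀ j, 1 ≤ j → j ≤ n → IsRatAffineOn S fun x => X x j := by
  intro j
  induction j using Nat.strong_induction_on with
  | _ j ih =>
    intro hj1 hjn
    match j, hj1 with
    | 1, _ => exact ha.congr fun x hx => (hX x hx).1.symm
    | 2, _ => exact hb.congr fun x hx => (hX x hx).2.1.symm
    | 3, _ => exact hc.congr fun x hx => (hX x hx).2.2.1.symm
    | m + 4, _ =>
      have hmed := isRatAffineOn_medn (horder.mono (by omega : m + 3 ≤ n))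
        fun i hi1 hi2 => ih i (by omega) hi1 (by omega)
      have hsum := IsRatAffineOn.sum (S := S) (Icc 1 (m + 3)) fun i hi =>
        have hi := mem_Icc.mp hi
        ih i (by omega) hi.1 (by omega)
      refine ((hmed.const_mul (m + 4)).sub hsum).congr fun x hx => ?_
      rw [(hX x hx).2.2.2 (m + 4) (by omega)]
      norm_cast

theorem terms_affine_on_constant_order_general (n : ℕ) (S : Set ℝ)
    (X : ℝ → ℕ → ℝ) (hX : ∀ x ∈ S, IsMnM 0 x 1 (X x))
    (horder : ∀ x ∈ S, ∀ y ∈ S, ∀ i j, 1 ≤ i → i ≤ n → 1 ≤ j → j ≤ n →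
      (X x i ≤ X x j ↔ X y i ≤ X y j)) :
    ∀ j, 1 ≤ j → j ≤ n →
      (∃ p q : ℚ, ∀ x ∈ S, X x j = (p : ℝ) * x + (q : ℝ)) ∧
      (∃ p q : ℚ, ∀ x ∈ S, medn (X x) j = (p : ℝ) * x + (q : ℝ)) := by
  have hterm := isRatAffineOn_mnm_term (.const 0) .id (.const 1)
    (fun x hx => by simpa using hX x hx) horder
  exact fun j hj1 hjn => ⟨hterm j hj1 hjn,
    isRatAffineOn_medn (OrderConstantOn.mono horder hjn) fun i hi1 hij =>
      hterm i hi1 (hij.trans hjn)⟩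

theorem terms_affine_on_constant_order (n : ℕ) (S : Set ℝ)
    (hS : S ⊆ Set.Ioo (0 : ℝ) 1)
    (X : ℝ → ℕ → ℝ) (hX : ∀ x ∈ S, IsMnM 0 x 1 (X x))
    (horder : ∀ x ∈ S, ∀ y ∈ S, ∀ i j, 1 ≤ i → i ≤ n → 1 ≤ j → j ≤ n →
      (X x i ≤ X x j ↔ X y i ≤ X y j)) :
    ∀ j, 1 ≤ j → j ≤ n →
      (∃ p q : ℚ, ∀ x ∈ S, X x j = (p : ℝ) * x + (q : ℝ)) ∧
      (∃ p q : ℚ, ∀ x ∈ S, medn (X x) j = (p : ℝ) * x + (q : ℝ)) :=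
  terms_affine_on_constant_order_general n S X hX horder
end
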